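/- (Converse direction of Theorem 2 of the paper.) Under Assumption 1, let 𝒱_u, 𝒱_l ⊆ ℝ^K be sets such that: for every w ∈ ℝ^K there exists v ∈ 𝒱_u with 1{X_i v ≥ 0} = 1{X_i w ≥ 0} for all i = 1, …, n, and for every w ∈ ℝ^K there exists v ∈ 𝒱_l with 1{X_i v ≤ 0} = 1{X_i w ≤ 0} for all i = 1, …, n. If b ∈ ℝ^K satisfies E[n^{-1} Σ_{i=1}^n (2Y_i − 1)·1{X_i b ≥ 0}·1{X_i v < 0}] ≥ 0 for all v ∈ 𝒱_u and E[n^{-1} Σ_{i=1}^n (1 − 2Y_i)·1{X_i b ≤ 0}·1{X_i v > 0}] ≥ 0 for all v ∈ 𝒱_l, then for every i = 1, …, n: E[(2Y_i − 1)·1{X_i b ≥ 0}] ≥ 0 and E[(1 − 2Y_i)·1{X_i b ≤ 0}] ≥ 0 (equivalently, b ∈ B*_n). -/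

import Mathlib

/-!
Let `q i = E[2 Y_i - 1] = 2 ℙ(X_i β + U_i ≥ 0) - 1`. Since `ℙ(U_i ≥ 0) = 1/2`, `q i` has the
(weak) sign of `X_i β`. If `X_i b ≥ 0` but `X_i β < 0`, pick `v ∈ 𝒱_u` reproducing the signs of
`X_j β`: every term of the aggregated upper moment at `v` is then `≤ 0` while the sum is `≥ 0`, so
all terms vanish and `q i = 0`. The lower moments are handled symmetrically.

For `b ∈ B*_n`, keep `Ỹ = Y` and give `Ũ_i` the sign of `U_i` (this preserves the median and
the independence of the signs). The moment inequalities make `{U_i ≥ 0}` and `{Y_i = 1}` a.s.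
nested in the direction required by the sign of `X_i b`, which is exactly what is needed to
choose the size of `Ũ_i` so that `Y_i = 1{X_i b + Ũ_i ≥ 0}` a.s.
-/

open MeasureTheory ProbabilityTheory

/-- Membership in the finite sample identified set `B*_n`. -/
def memFSID {Ω : Type*} [MeasurableSpace Ω] (P : Measure Ω) {n K : ℕ}
    (X : Fin n → Fin K → ℝ) (Y : Fin n → Ω → ℝ) (b : Fin K → ℝ) : Prop :=
  ∃ Yt Ut : Fin n → Ω → ℝ,
    (∀ i, Measurable (Yt i)) ∧ (∀ i, Measurable (Ut i)) ∧
    (∀ i, ∀ᵐ ω ∂P, Yt i ω = if 0 ≤ (∑ j, X i j * b j) + Ut i ω then 1 else 0) ∧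
    Measure.map (fun ω => fun i => Yt i ω) P =
      Measure.map (fun ω => fun i => Y i ω) P ∧
    (∀ i, P {ω | 0 ≤ Ut i ω} = 1/2) ∧
    iIndepFun
      (fun i ω => if 0 ≤ Ut i ω then (1 : ℝ) else 0) P

lemma nonneg_of_sum_mul_ite_nonneg {ι : Type*} [Fintype ι] {q a c s : ι → ℝ}
    (hq_nonneg : ∀ j, 0 ≤ a j → 0 ≤ q j) (hq_nonpos : ∀ j, a j < 0 → q j ≤ 0)
    (hs : ∀ j, 0 ≤ s j ↔ 0 ≤ a j)
    (hsum : 0 ≤ ∑ j, q j * (if 0 ≤ c j then 1 else 0) * (if s j < 0 then 1 else 0))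
    {i : ι} (hc : 0 ≤ c i) : 0 ≤ q i := by
  by_cases ha : 0 ≤ a i
  · exact hq_nonneg i ha
  have hterm : ∀ j ∈ Finset.univ,
      q j * (if 0 ≤ c j then 1 else 0) * (if s j < 0 then 1 else 0) ≤ 0 := by
    intro j _
    split_ifs with hcj hsj <;> simp only [mul_one, mul_zero, le_refl]
    exact hq_nonpos j (not_le.1 fun h => hsj.not_ge ((hs j).2 h))
  have hzero := (Finset.sum_eq_zero_iff_of_nonpos hterm).1
    (le_antisymm (Finset.sum_nonpos hterm) hsum) i (Finset.mem_univ i)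
  have hsi : s i < 0 := not_le.1 (mt (hs i).1 ha)
  simp only [if_pos hc, if_pos hsi, mul_one] at hzero
  exact hzero.ge

lemma nonpos_of_sum_neg_mul_ite_nonneg {ι : Type*} [Fintype ι] {q a c s : ι → ℝ}
    (hq_nonpos : ∀ j, a j ≤ 0 → q j ≤ 0) (hq_nonneg : ∀ j, 0 < a j → 0 ≤ q j)
    (hs : ∀ j, s j ≤ 0 ↔ a j ≤ 0)
    (hsum : 0 ≤ ∑ j, -q j * (if c j ≤ 0 then 1 else 0) * (if 0 < s j then 1 else 0))
    {i : ι} (hc : c i ≤ 0) : q i ≤ 0 := by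
  have := nonneg_of_sum_mul_ite_nonneg (q := -q) (a := -a) (c := -c) (s := -s)
    (fun j hj => neg_nonneg.2 (hq_nonpos j (neg_nonneg.1 hj)))
    (fun j hj => neg_nonpos.2 (hq_nonneg j (neg_neg_iff_pos.1 hj)))
    (fun j => by simpa using hs j) (by simpa using hsum) (neg_nonneg.2 hc)
  simpa using this

lemma integral_const_mul_sum_mul_mul {Ω ι : Type*} [MeasurableSpace Ω] {μ : Measure Ω}
    (s : Finset ι) {f : ι → Ω → ℝ} (hf : ∀ j, Integrable (f j) μ) (r : ℝ) (k m : ι → ℝ) :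
    ∫ ω, r * ∑ j ∈ s, f j ω * k j * m j ∂μ = r * ∑ j ∈ s, (∫ ω, f j ω ∂μ) * k j * m j := by
  rw [integral_const_mul, integral_finsetSum _ fun j _ => ((hf j).mul_const _).mul_const _]
  simp_rw [integral_mul_const]

lemma eq_indicator_of_eq_ite {Ω : Type*} {U Y : Ω → ℝ} {a : ℝ}
    (hY : ∀ ω, Y ω = if 0 ≤ a + U ω then 1 else 0) : Y = {ω | 0 ≤ a + U ω}.indicator 1 := by
  ext ω
  simp [hY, Set.indicator_apply]

lemma integral_one_sub_two_mul {Ω : Type*} [MeasurableSpace Ω] {μ : Measure Ω} (Y : Ω → ℝ) :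
    ∫ ω, (1 - 2 * Y ω) ∂μ = -∫ ω, (2 * Y ω - 1) ∂μ := by
  rw [← integral_neg]
  simp_rw [neg_sub]

section ThresholdSets

variable {Ω : Type*} [MeasurableSpace Ω] {μ : Measure Ω} {U : Ω → ℝ} {a : ℝ}

lemma measure_setOf_nonneg_le_of_nonneg (ha : 0 ≤ a) :
    μ {ω | 0 ≤ U ω} ≤ μ {ω | 0 ≤ a + U ω} :=
  measure_mono fun ω (hω : 0 ≤ U ω) => show 0 ≤ a + U ω by linarith

lemma measure_setOf_add_nonneg_le_of_nonpos (ha : a ≤ 0) :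
    μ {ω | 0 ≤ a + U ω} ≤ μ {ω | 0 ≤ U ω} :=
  measure_mono fun ω (hω : 0 ≤ a + U ω) => show 0 ≤ U ω by linarith

lemma ae_nonneg_imp_of_measure_le [IsFiniteMeasure μ] (hU : Measurable U)
    (h : μ {ω | 0 ≤ U ω} ≤ μ {ω | 0 ≤ a + U ω}) : ∀ᵐ ω ∂μ, 0 ≤ U ω → 0 ≤ a + U ω := by
  rcases le_or_gt 0 a with ha | ha
  · exact ae_of_all _ fun ω hω => by linarith
  · have hsub : {ω | 0 ≤ a + U ω} ⊆ {ω | 0 ≤ U ω} := fun ω (hω : 0 ≤ a + U ω) =>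
      show 0 ≤ U ω by linarith
    exact (ae_eq_of_subset_of_measure_ge hsub h
      (measurableSet_le measurable_const (hU.const_add a)).nullMeasurableSet
      (measure_ne_top _ _)).symm.le

lemma ae_add_nonneg_imp_of_measure_le [IsFiniteMeasure μ] (hU : Measurable U)
    (h : μ {ω | 0 ≤ a + U ω} ≤ μ {ω | 0 ≤ U ω}) : ∀ᵐ ω ∂μ, 0 ≤ a + U ω → 0 ≤ U ω := by
  simpa using ae_nonneg_imp_of_measure_le (U := fun ω => a + U ω) (a := -a) (hU.const_add a)
    (by simpa using h)

end ThresholdSets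

section BinaryResponse

variable {Ω : Type*} [MeasurableSpace Ω] {P : Measure Ω} {U Y : Ω → ℝ} {a : ℝ}

lemma measurable_of_eq_ite (hU : Measurable U)
    (hY : ∀ ω, Y ω = if 0 ≤ a + U ω then 1 else 0) : Measurable Y := by
  rw [funext hY]
  exact Measurable.ite (measurableSet_le measurable_const (hU.const_add a))
    measurable_const measurable_const

variable [IsProbabilityMeasure P]

lemma integrable_two_mul_sub_one (hU : Measurable U)
    (hY : ∀ ω, Y ω = if 0 ≤ a + U ω then 1 else 0) :
    Integrable (fun ω => 2 * Y ω - 1) P := by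
  rw [eq_indicator_of_eq_ite hY]
  exact ((integrable_const 1).indicator
    (measurableSet_le measurable_const (hU.const_add a))).const_mul 2 |>.sub (integrable_const 1)

lemma integral_two_mul_sub_one (hU : Measurable U)
    (hY : ∀ ω, Y ω = if 0 ≤ a + U ω then 1 else 0) :
    ∫ ω, (2 * Y ω - 1) ∂P = 2 * P.real {ω | 0 ≤ a + U ω} - 1 := by
  rw [eq_indicator_of_eq_ite hY, integral_sub _ (integrable_const 1), integral_const_mul,
    integral_indicator_one (measurableSet_le measurable_const (hU.const_add a))]
  · simp
  · exact ((integrable_const 1).indicator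
      (measurableSet_le measurable_const (hU.const_add a))).const_mul 2

variable (hU : Measurable U) (hY : ∀ ω, Y ω = if 0 ≤ a + U ω then 1 else 0)
  (hmed : P {ω | 0 ≤ U ω} = 1 / 2)
include hU hY hmed

lemma integral_two_mul_sub_one_nonneg_iff :
    0 ≤ ∫ ω, (2 * Y ω - 1) ∂P ↔ P {ω | 0 ≤ U ω} ≤ P {ω | 0 ≤ a + U ω} := by
  rw [integral_two_mul_sub_one hU hY, ← ENNReal.toReal_le_toReal (measure_ne_top _ _)
    (measure_ne_top _ _), hmed, ← measureReal_def]
  norm_num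
  constructor <;> intro <;> linarith

lemma integral_two_mul_sub_one_nonpos_iff :
    ∫ ω, (2 * Y ω - 1) ∂P ≤ 0 ↔ P {ω | 0 ≤ a + U ω} ≤ P {ω | 0 ≤ U ω} := by
  rw [integral_two_mul_sub_one hU hY, ← ENNReal.toReal_le_toReal (measure_ne_top _ _)
    (measure_ne_top _ _), hmed, ← measureReal_def]
  norm_num
  constructor <;> intro <;> linarith

lemma integral_two_mul_sub_one_nonneg_of_nonneg (ha : 0 ≤ a) : 0 ≤ ∫ ω, (2 * Y ω - 1) ∂P :=
  (integral_two_mul_sub_one_nonneg_iff hU hY hmed).2 (measure_setOf_nonneg_le_of_nonneg ha)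

lemma integral_two_mul_sub_one_nonpos_of_nonpos (ha : a ≤ 0) : ∫ ω, (2 * Y ω - 1) ∂P ≤ 0 :=
  (integral_two_mul_sub_one_nonpos_iff hU hY hmed).2 (measure_setOf_add_nonneg_le_of_nonpos ha)

end BinaryResponse

/-- The branch `¬ s ∧ y` is only realisable when `0 < c`; otherwise `-1` just keeps the sign. -/
noncomputable def latentShock (c : ℝ) (s y : Prop) [Decidable s] [Decidable y] : ℝ :=
  if s then (if y then |c| else 0) else if y then (if 0 < c then -c else -1) else -(|c| + 1)

section LatentShock

variable {c : ℝ} {s y : Prop} [Decidable s] [Decidable y]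

lemma latentShock_nonneg_iff : 0 ≤ latentShock c s y ↔ s := by
  unfold latentShock
  split_ifs <;> simp [*]; linarith [abs_nonneg c]

lemma add_latentShock_nonneg_iff (h₁ : 0 ≤ c → s → y) (h₂ : c ≤ 0 → y → s) :
    0 ≤ c + latentShock c s y ↔ y := by
  unfold latentShock
  split_ifs with hs hy hy hc <;> simp only [hy, iff_true, iff_false, not_le]
  · linarith [neg_abs_le c]
  · by_contra! hc
    exact hy (h₁ (by linarith) hs)
  · linarith
  · exact absurd (h₂ (not_lt.1 hc) hy) hs
  · linarith [le_abs_self c]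

lemma measurable_latentShock {Ω : Type*} [MeasurableSpace Ω] (c : ℝ) {p q : Ω → Prop}
    [DecidablePred p] [DecidablePred q] (hp : MeasurableSet {ω | p ω})
    (hq : MeasurableSet {ω | q ω}) : Measurable fun ω => latentShock c (p ω) (q ω) :=
  Measurable.ite hp (Measurable.ite hq measurable_const measurable_const)
    (Measurable.ite hq measurable_const measurable_const)

end LatentShock

lemma memFSID_of_moment_ineq {Ω : Type*} [MeasurableSpace Ω] {P : Measure Ω}
    [IsProbabilityMeasure P] {n K : ℕ} {X : Fin n → Fin K → ℝ} {b : Fin K → ℝ}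
    {a : Fin n → ℝ} {U Y : Fin n → Ω → ℝ} (hU : ∀ i, Measurable (U i))
    (hY : ∀ i ω, Y i ω = if 0 ≤ a i + U i ω then 1 else 0)
    (hmed : ∀ i, P {ω | 0 ≤ U i ω} = 1 / 2)
    (hindep : iIndepFun (fun i ω => if 0 ≤ U i ω then (1 : ℝ) else 0) P)
    (hup : ∀ i, 0 ≤ ∑ j, X i j * b j → 0 ≤ ∫ ω, (2 * Y i ω - 1) ∂P)
    (hlow : ∀ i, ∑ j, X i j * b j ≤ 0 → ∫ ω, (2 * Y i ω - 1) ∂P ≤ 0) :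
    memFSID P X Y b := by
  refine ⟨Y, fun i ω => latentShock (∑ j, X i j * b j) (0 ≤ U i ω) (0 ≤ a i + U i ω),
    fun i => measurable_of_eq_ite (hU i) (hY i), fun i => ?_, fun i => ?_, rfl, ?_, ?_⟩
  · exact measurable_latentShock _ (measurableSet_le measurable_const (hU i))
      (measurableSet_le measurable_const ((hU i).const_add (a i)))
  · have h₁ := Filter.eventually_imp_distrib_left.2 fun hc => ae_nonneg_imp_of_measure_le (hU i)
      ((integral_two_mul_sub_one_nonneg_iff (hU i) (hY i) (hmed i)).1 (hup i hc))
    have h₂ := Filter.eventually_imp_distrib_left.2 fun hc => ae_add_nonneg_imp_of_measure_le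
      (hU i) ((integral_two_mul_sub_one_nonpos_iff (hU i) (hY i) (hmed i)).1 (hlow i hc))
    filter_upwards [h₁, h₂] with ω h₁ h₂
    simp only [hY, add_latentShock_nonneg_iff h₁ h₂]
  · simpa only [latentShock_nonneg_iff] using hmed
  · simpa only [latentShock_nonneg_iff] using hindep

theorem theorem2_converse
    {Ω : Type*} [MeasurableSpace Ω] (P : Measure Ω) [IsProbabilityMeasure P]
    {n K : ℕ}
    (X : Fin n → Fin K → ℝ) (β : Fin K → ℝ)
    (U : Fin n → Ω → ℝ) (hU : ∀ i, Measurable (U i))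
    (Y : Fin n → Ω → ℝ)
    (hY : ∀ i ω, Y i ω = if 0 ≤ (∑ j, X i j * β j) + U i ω then 1 else 0)
    (hmed : ∀ i, P {ω | 0 ≤ U i ω} = 1/2)
    (hindep : iIndepFun
      (fun i ω => if 0 ≤ U i ω then (1 : ℝ) else 0) P)
    (Vu Vl : Set (Fin K → ℝ))
    (hVu : ∀ w : Fin K → ℝ, ∃ v ∈ Vu, ∀ i : Fin n,
      (0 ≤ (∑ j, X i j * v j) ↔ 0 ≤ (∑ j, X i j * w j)))
    (hVl : ∀ w : Fin K → ℝ, ∃ v ∈ Vl, ∀ i : Fin n,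
      ((∑ j, X i j * v j) ≤ 0 ↔ (∑ j, X i j * w j) ≤ 0))
    (b : Fin K → ℝ)
    (hmomu : ∀ v ∈ Vu,
      0 ≤ (∫ ω, (n : ℝ)⁻¹ * ∑ i, (2 * Y i ω - 1) *
            (if 0 ≤ (∑ j, X i j * b j) then 1 else 0) *
            (if (∑ j, X i j * v j) < 0 then 1 else 0) ∂P))
    (hmoml : ∀ v ∈ Vl,
      0 ≤ (∫ ω, (n : ℝ)⁻¹ * ∑ i, (1 - 2 * Y i ω) *
            (if (∑ j, X i j * b j) ≤ 0 then 1 else 0) *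
            (if 0 < (∑ j, X i j * v j) then 1 else 0) ∂P)) :
    (∀ i : Fin n,
      0 ≤ (∫ ω, (2 * Y i ω - 1) *
            (if 0 ≤ (∑ j, X i j * b j) then 1 else 0) ∂P) ∧
      0 ≤ (∫ ω, (1 - 2 * Y i ω) *
            (if (∑ j, X i j * b j) ≤ 0 then 1 else 0) ∂P)) ∧
    memFSID P X Y b := by
  have hint : ∀ i, Integrable (fun ω => 2 * Y i ω - 1) P :=
    fun i => integrable_two_mul_sub_one (hU i) (hY i)
  have hint' : ∀ i, Integrable (fun ω => 1 - 2 * Y i ω) P := fun i => by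
    simpa only [neg_sub] using (hint i).fun_neg
  have hq_nonneg := fun i => integral_two_mul_sub_one_nonneg_of_nonneg (hU i) (hY i) (hmed i)
  have hq_nonpos := fun i => integral_two_mul_sub_one_nonpos_of_nonpos (hU i) (hY i) (hmed i)
  have hn : ∀ i : Fin n, (0 : ℝ) < (n : ℝ)⁻¹ := fun i => inv_pos.2 (Nat.cast_pos.2 i.pos)
  have upper : ∀ i, 0 ≤ ∑ j, X i j * b j → 0 ≤ ∫ ω, (2 * Y i ω - 1) ∂P := fun i hc => by
    obtain ⟨v, hv, hvβ⟩ := hVu β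
    have hmom := hmomu v hv
    rw [integral_const_mul_sum_mul_mul _ hint, mul_nonneg_iff_of_pos_left (hn i)] at hmom
    exact nonneg_of_sum_mul_ite_nonneg hq_nonneg (fun j h => hq_nonpos j h.le) hvβ hmom hc
  have lower : ∀ i, ∑ j, X i j * b j ≤ 0 → ∫ ω, (2 * Y i ω - 1) ∂P ≤ 0 := fun i hc => by
    obtain ⟨v, hv, hvβ⟩ := hVl β
    have hmom := hmoml v hv
    rw [integral_const_mul_sum_mul_mul _ hint', mul_nonneg_iff_of_pos_left (hn i)] at hmom
    simp_rw [integral_one_sub_two_mul] at hmom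
    exact nonpos_of_sum_neg_mul_ite_nonneg hq_nonpos (fun j h => hq_nonneg j h.le) hvβ hmom hc
  refine ⟨fun i => ⟨?_, ?_⟩, memFSID_of_moment_ineq hU hY hmed hindep upper lower⟩
  · rw [integral_mul_const]
    split_ifs with hc <;> simp [upper i, hc]
  · rw [integral_mul_const, integral_one_sub_two_mul]
    split_ifs with hc <;> simp [lower i, hc]
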